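/- Let A = {(f,g) ∈ C^∞(ℝ)² : f^{(i)}(0) = g^{(i)}(0), i = 0,…,m}. For a pair of order-≤ k operators Δ1 = Σ a_i(x)(d/dx)^i, Δ2 = Σ b_i(y)(d/dy)^i, the compatibility condition p ∘ Δ1 ∘ π1 = p ∘ Δ2 ∘ π2 (where p is the m-jet at 0) implies, at jet level i = 0: a_s(0) = b_s(0) for s ≤ m and a_s(0) = 0 = b_s(0) for s > m. -/

import Mathlib

/-- The differential operator `Σ_{i=0}^k aᵢ(x) (d/dx)ⁱ` on functions on ℝ. -/
noncomputable def diffOp1D (k : ℕ) (a : ℕ → ℝ → ℝ) (f : ℝ → ℝ) : ℝ → ℝ :=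
  fun x => ∑ i ∈ Finset.range (k + 1), a i x * iteratedDeriv i f x

lemma iteratedDeriv_pow_aux (s i : ℕ) :
    iteratedDeriv i (fun x : ℝ => x ^ s) =
      fun x => (s.descFactorial i : ℝ) * x ^ (s - i) := by
  induction i with
  | zero => simp
  | succ i ih =>
    rw [iteratedDeriv_succ, ih]
    funext x
    rw [deriv_const_mul _ (differentiable_pow _ |>.differentiableAt), deriv_pow_field]
    rw [Nat.descFactorial_succ]
    push_cast
    ring_nf
    congr 2
    omega

lemma iteratedDeriv_pow_zero (s i : ℕ) :
    iteratedDeriv i (fun x : ℝ => x ^ s) 0 =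
      if i = s then (s.factorial : ℝ) else 0 := by
  rw [iteratedDeriv_pow_aux]
  rcases lt_trichotomy i s with h | h | h
  · simp [Nat.sub_ne_zero_of_lt h, zero_pow, h.ne]
  · subst h; simp [Nat.descFactorial_self]
  · simp [Nat.descFactorial_eq_zero_iff_lt.mpr h, h.ne']

lemma iteratedDeriv_zero_fun (i : ℕ) :
    iteratedDeriv i (fun _ : ℝ => (0 : ℝ)) = fun _ => 0 := by
  induction i with
  | zero => simp
  | succ i ih => rw [iteratedDeriv_succ, ih]; funext x; simp

lemma apply_pow (k : ℕ) (a : ℕ → ℝ → ℝ) (s : ℕ) (hs : s ≤ k) :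
    diffOp1D k a (fun x : ℝ => x ^ s) 0 = a s 0 * (s.factorial : ℝ) := by
  unfold diffOp1D
  rw [Finset.sum_eq_single s]
  · rw [iteratedDeriv_pow_zero]; simp
  · intro i _ hne
    rw [iteratedDeriv_pow_zero]; simp [hne]
  · intro h
    exact absurd (Finset.mem_range.mpr (Nat.lt_succ_of_le hs)) h

/-- for the algebra
`A = {(f,g) : f⁽ⁱ⁾(0) = g⁽ⁱ⁾(0), i = 0,…,m}` and a pair of order-`≤ k` operators
`Δ₁ = Σ aᵢ ∂ⁱ`, `Δ₂ = Σ bᵢ ∂ⁱ`, the compatibility condition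
`p ∘ Δ₁ ∘ π₁ = p ∘ Δ₂ ∘ π₂` (equality of `m`-jets at `0` of `Δ₁ f` and `Δ₂ g`
for all `(f,g) ∈ A`) implies, at jet level `i = 0`:
`a_s(0) = b_s(0)` for `s ≤ m` and `a_s(0) = 0 = b_s(0)` for `s > m`. -/
theorem contact_diffOp_zero_jet_conditions (m k : ℕ) (a b : ℕ → ℝ → ℝ)
    (ha : ∀ i, ContDiff ℝ (⊤ : ℕ∞) (a i)) (hb : ∀ i, ContDiff ℝ (⊤ : ℕ∞) (b i))
    (hcompat : ∀ f g : ℝ → ℝ, ContDiff ℝ (⊤ : ℕ∞) f → ContDiff ℝ (⊤ : ℕ∞) g →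
      (∀ i ≤ m, iteratedDeriv i f 0 = iteratedDeriv i g 0) →
      ∀ j ≤ m, iteratedDeriv j (diffOp1D k a f) 0 = iteratedDeriv j (diffOp1D k b g) 0) :
    (∀ s ≤ k, s ≤ m → a s 0 = b s 0) ∧
    (∀ s ≤ k, m < s → a s 0 = 0 ∧ b s 0 = 0) := by
  have hfact : ∀ s : ℕ, (s.factorial : ℝ) ≠ 0 := fun s => by
    exact_mod_cast s.factorial_ne_zero
  constructor
  · intro s hsk hsm
    have h := hcompat (fun x => x ^ s) (fun x => x ^ s) ((contDiff_id.pow s)) ((contDiff_id.pow s))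
      (fun i _ => rfl) 0 (Nat.zero_le m)
    rw [iteratedDeriv_zero, iteratedDeriv_zero, apply_pow k a s hsk, apply_pow k b s hsk] at h
    exact mul_right_cancel₀ (hfact s) h
  · intro s hsk hms
    have hzero : ∀ i ≤ m, iteratedDeriv i (fun x : ℝ => x ^ s) 0 =
        iteratedDeriv i (fun _ : ℝ => (0 : ℝ)) 0 := by
      intro i him
      rw [iteratedDeriv_pow_zero, iteratedDeriv_zero_fun]
      simp [(him.trans_lt hms).ne]
    have hzero' : ∀ i ≤ m, iteratedDeriv i (fun _ : ℝ => (0 : ℝ)) 0 =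
        iteratedDeriv i (fun x : ℝ => x ^ s) 0 := fun i him => (hzero i him).symm
    have hzop : ∀ c : ℕ → ℝ → ℝ, diffOp1D k c (fun _ : ℝ => (0 : ℝ)) 0 = 0 := by
      intro c
      unfold diffOp1D
      simp [iteratedDeriv_zero_fun]
    constructor
    · have h := hcompat (fun x => x ^ s) (fun _ => (0 : ℝ)) ((contDiff_id.pow s)) contDiff_const
        hzero 0 (Nat.zero_le m)
      rw [iteratedDeriv_zero, iteratedDeriv_zero, apply_pow k a s hsk, hzop] at h
      exact (mul_eq_zero.mp h).resolve_right (hfact s)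
    · have h := hcompat (fun _ => (0 : ℝ)) (fun x => x ^ s) contDiff_const ((contDiff_id.pow s))
        hzero' 0 (Nat.zero_le m)
      rw [iteratedDeriv_zero, iteratedDeriv_zero, apply_pow k b s hsk, hzop] at h
      exact (mul_eq_zero.mp h.symm).resolve_right (hfact s)
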